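/- arXiv:1906.01808 — 4 statements merged into one kernel-verified Lean document; each statement's English description precedes it below -/
import Mathlib

section
/- Let 0 < r ≤ 1 and u > 0. Then (2/r) ∫_{-∞}^{0} (-v) · e^{-v^2/r} · e^{-(1-r) u^2 / r} · I_0( 2 sqrt(1-r) · v · u / r ) dv = 1. -/
/-!
Read `(x, y) ↦ exp (-((x - a)² + y²) / r)` in polar coordinates `(ρ cos θ, ρ sin θ)`.
The exponent becomes `-(ρ² + a² - 2aρ cos θ) / r`, and integrating over `θ ∈ (-π, π)` gives
`2π ρ e^{-ρ²/r} e^{-a²/r} I₀(2aρ/r)`. Hence `2π` times the integral of the theorem, after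
the substitution `v ↦ -v` and with `a = √(1 - r) u`, is the planar Gaussian integral `π r`.
-/

open MeasureTheory Real

/-- Modified Bessel function of the first kind of order zero,
`I₀(y) = (1/π) ∫_0^π e^{y cos φ} dφ`. -/
noncomputable def besselI0 (y : ℝ) : ℝ :=
  (1 / Real.pi) * ∫ φ in (0:ℝ)..Real.pi, Real.exp (y * Real.cos φ)

open Set

theorem besselI0_neg (y : ℝ) : besselI0 (-y) = besselI0 y := by
  have h := intervalIntegral.integral_comp_sub_left (a := 0) (b := π)
    (fun φ => exp (y * cos φ)) π
  simp only [sub_zero, sub_self, cos_pi_sub, mul_neg, ← neg_mul] at h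
  rw [besselI0, besselI0, h]

theorem integral_Ioo_exp_mul_cos (c : ℝ) :
    ∫ θ in Ioo (-π) π, exp (c * cos θ) = 2 * π * besselI0 c := by
  have hcont : ∀ a b : ℝ, IntervalIntegrable (fun θ => exp (c * cos θ)) volume a b :=
    fun a b => (by fun_prop : Continuous fun θ => exp (c * cos θ)).intervalIntegrable a b
  have hsymm : ∫ θ in -π..0, exp (c * cos θ) = ∫ θ in 0..π, exp (c * cos θ) := by
    simpa only [cos_neg, neg_zero] using
      (intervalIntegral.integral_comp_neg (a := 0) (b := π) fun θ => exp (c * cos θ)).symm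
  rw [← integral_Ioc_eq_integral_Ioo, ← intervalIntegral.integral_of_le (by linarith [pi_pos]),
    ← intervalIntegral.integral_add_adjacent_intervals (hcont _ _) (hcont _ _), hsymm, besselI0]
  field_simp
  ring

theorem integrableOn_comp_polarCoord_symm {E : Type*} [NormedAddCommGroup E] [NormedSpace ℝ E]
    {f : ℝ × ℝ → E} (hf : Integrable f) :
    IntegrableOn (fun p => p.1 • f (polarCoord.symm p)) polarCoord.target := by
  have h := (integrableOn_image_iff_integrableOn_abs_det_fderiv_smul volume
    polarCoord.open_target.measurableSet
    (fun p _ => (hasFDerivAt_polarCoord_symm p).hasFDerivWithinAt) polarCoord.symm.injOn f).1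
    (by rw [polarCoord.symm_image_target_eq_source]; exact hf.integrableOn)
  simp_rw [det_fderivPolarCoordSymm] at h
  refine h.congr_fun (fun p hp => ?_) polarCoord.open_target.measurableSet
  simp only [abs_of_pos (show 0 < p.1 from hp.1)]

section PlanarGaussian

variable {r : ℝ} (a : ℝ)

theorem exp_neg_sq_dist_eq_mul (p : ℝ × ℝ) :
    exp (-((p.1 - a) ^ 2 + p.2 ^ 2) / r) =
      exp (-r⁻¹ * (p.1 - a) ^ 2) * exp (-r⁻¹ * p.2 ^ 2) := by
  rw [← exp_add]
  ring_nf

theorem integrable_exp_neg_sq_dist (hr : 0 < r) :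
    Integrable fun p : ℝ × ℝ => exp (-((p.1 - a) ^ 2 + p.2 ^ 2) / r) := by
  have hb : 0 < r⁻¹ := inv_pos.2 hr
  simp_rw [exp_neg_sq_dist_eq_mul a]
  rw [Measure.volume_eq_prod]
  exact ((integrable_exp_neg_mul_sq hb).comp_sub_right a).mul_prod (integrable_exp_neg_mul_sq hb)

theorem integral_exp_neg_sq_dist (hr : 0 < r) :
    ∫ p : ℝ × ℝ, exp (-((p.1 - a) ^ 2 + p.2 ^ 2) / r) = π * r := by
  simp_rw [exp_neg_sq_dist_eq_mul a]
  rw [Measure.volume_eq_prod,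
    integral_prod_mul (fun x => exp (-r⁻¹ * (x - a) ^ 2)) fun y => exp (-r⁻¹ * y ^ 2),
    integral_sub_right_eq_self (fun x => exp (-r⁻¹ * x ^ 2)) a, integral_gaussian,
    div_inv_eq_mul, mul_self_sqrt (by positivity)]

theorem exp_neg_sq_dist_polarCoord_symm (p : ℝ × ℝ) :
    exp (-(((polarCoord.symm p).1 - a) ^ 2 + (polarCoord.symm p).2 ^ 2) / r) =
      exp (-p.1 ^ 2 / r) * exp (-a ^ 2 / r) * exp (2 * a * p.1 / r * cos p.2) := by
  rw [polarCoord_symm_apply, ← exp_add, ← exp_add]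
  congr 1
  linear_combination (-p.1 ^ 2 / r) * sin_sq_add_cos_sq p.2

theorem integral_Ioi_mul_exp_mul_besselI0 (hr : 0 < r) :
    ∫ v in Ioi 0, v * exp (-v ^ 2 / r) * exp (-a ^ 2 / r) * besselI0 (2 * a * v / r) = r / 2 := by
  have hpolar :=
    integral_comp_polarCoord_symm fun p : ℝ × ℝ => exp (-((p.1 - a) ^ 2 + p.2 ^ 2) / r)
  have hintegrable := integrableOn_comp_polarCoord_symm (integrable_exp_neg_sq_dist a hr)
  rw [integral_exp_neg_sq_dist a hr] at hpolar
  simp only [exp_neg_sq_dist_polarCoord_symm, smul_eq_mul] at hpolar hintegrable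
  rw [polarCoord_target, Measure.volume_eq_prod, setIntegral_prod _ hintegrable] at hpolar
  have hangle (ρ : ℝ) : ∫ θ in Ioo (-π) π,
      ρ * (exp (-ρ ^ 2 / r) * exp (-a ^ 2 / r) * exp (2 * a * ρ / r * cos θ)) =
        2 * π * (ρ * exp (-ρ ^ 2 / r) * exp (-a ^ 2 / r) * besselI0 (2 * a * ρ / r)) := by
    rw [integral_const_mul, integral_const_mul, integral_Ioo_exp_mul_cos]
    ring
  simp only [hangle, integral_const_mul] at hpolar
  exact mul_left_cancel₀ (by positivity : 2 * π ≠ 0) (hpolar.trans (by ring))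

end PlanarGaussian

theorem CL_normal_component_normalization_general (r u : ℝ) (hr : 0 < r) (hr' : r ≤ 1) :
    (2 / r) * ∫ v in Set.Iio (0:ℝ),
      (-v) * Real.exp (-v ^ 2 / r) * Real.exp (-(1 - r) * u ^ 2 / r) *
        besselI0 (2 * Real.sqrt (1 - r) * v * u / r) = 1 := by
  set a := √(1 - r) * u
  have ha : a ^ 2 = (1 - r) * u ^ 2 := by rw [mul_pow, sq_sqrt (by linarith)]
  have hreflect : ∫ v in Iio 0, -v * exp (-v ^ 2 / r) * exp (-(1 - r) * u ^ 2 / r) *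
        besselI0 (2 * √(1 - r) * v * u / r) =
      ∫ v in Ioi 0, v * exp (-v ^ 2 / r) * exp (-a ^ 2 / r) * besselI0 (2 * a * v / r) := by
    rw [← integral_Iic_eq_integral_Iio, ← neg_zero, ← integral_comp_neg_Ioi, neg_zero]
    refine setIntegral_congr_fun measurableSet_Ioi fun v _ => ?_
    rw [ha, ← besselI0_neg]
    simp only [a]
    ring_nf
  rw [hreflect, integral_Ioi_mul_exp_mul_besselI0 a hr]
  field_simp

/-- For `0 < r ≤ 1` and `u > 0`,
`(2/r) ∫_{-∞}^0 (-v) e^{-v²/r} e^{-(1-r)u²/r} I₀(2√(1-r) v u / r) dv = 1`. -/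
theorem CL_normal_component_normalization (r u : ℝ) (hr : 0 < r) (hr' : r ≤ 1)
    (hu : 0 < u) :
    (2 / r) * ∫ v in Set.Iio (0:ℝ),
      (-v) * Real.exp (-v ^ 2 / r) * Real.exp (-(1 - r) * u ^ 2 / r) *
        besselI0 (2 * Real.sqrt (1 - r) * v * u / r) = 1 :=
  CL_normal_component_normalization_general r u hr hr'
end

section
/- Let a > 0, b > 0, ε > 0 with a + ε < b, let w ∈ R^2, and let δ > 0 satisfy e^{-(b-a-ε)/δ^2} ≤ δ. Then (b/π) ∫_{ {v ∈ R^2 : |v - (b/(b-a-ε)) w| > δ^{-1}} } e^{ε|v|^2} e^{a|v|^2} e^{-b|v-w|^2} dv ≤ δ · ( b/(b-a-ε) ) · exp( ((a+ε)b/(b-a-ε)) |w|^2 ). -/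
/-!
With `c = b - a - ε` and `m = (b / c) • w`, completing the square gives
`e^{(a+ε)|v|²} e^{-b|v-w|²} = e^{(a+ε)b|w|²/c} e^{-c|v-m|²}`. After translating by `m`, the
integral is a Gaussian tail outside the disc of radius `δ⁻¹`, which polar coordinates evaluate
to `(π/c) e^{-c/δ²} ≤ (π/c) δ`.
-/

open MeasureTheory Real Set Filter Module

theorem integral_Ioi_mul_exp_neg_mul_sq {c : ℝ} (hc : 0 < c) (R : ℝ) :
    ∫ y in Ioi R, y * exp (-c * y ^ 2) = exp (-c * R ^ 2) / (2 * c) := by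
  have hderiv (y : ℝ) : HasDerivAt (fun y ↦ -exp (-c * y ^ 2) / (2 * c))
      (y * exp (-c * y ^ 2)) y := by
    have hsq : HasDerivAt (fun y ↦ -c * y ^ 2) (-c * (2 * y)) y := by
      simpa using (hasDerivAt_pow 2 y).const_mul (-c)
    exact (hsq.exp.neg.div_const (2 * c)).congr_deriv (by field_simp)
  have hlim : Tendsto (fun y ↦ -exp (-c * y ^ 2) / (2 * c)) atTop (nhds 0) := by
    have hsq : Tendsto (fun y : ℝ ↦ -c * y ^ 2) atTop atBot :=
      (tendsto_pow_atTop two_ne_zero).const_mul_atTop_of_neg (neg_lt_zero.mpr hc)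
    simpa using ((tendsto_exp_atBot.comp hsq).neg.div_const (2 * c))
  rw [integral_Ioi_of_hasDerivAt_of_tendsto' (fun y _ ↦ hderiv y)
    (integrable_mul_exp_neg_mul_sq hc).integrableOn hlim]
  ring

theorem integral_setOf_lt_norm_exp_neg_mul_sq {E : Type*} [NormedAddCommGroup E]
    [InnerProductSpace ℝ E] [FiniteDimensional ℝ E] [MeasurableSpace E] [BorelSpace E]
    (hE : finrank ℝ E = 2) {c : ℝ} (hc : 0 < c) {R : ℝ} (hR : 0 ≤ R) :
    ∫ v in {v : E | R < ‖v‖}, exp (-c * ‖v‖ ^ 2) = π / c * exp (-c * R ^ 2) := by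
  have : Nontrivial E := finrank_pos_iff (R := ℝ) |>.mp (by omega)
  have hball : volume.real (Metric.ball (0 : E) 1) = π := by
    rw [measureReal_def, InnerProductSpace.volume_ball, hE]
    norm_num [Gamma_two, sq_sqrt pi_pos.le, pi_pos.le]
  rw [← integral_indicator (measurableSet_lt measurable_const measurable_norm)]
  calc ∫ v : E, {v : E | R < ‖v‖}.indicator (fun v ↦ exp (-c * ‖v‖ ^ 2)) v
      = ∫ v : E, (Ioi R).indicator (fun y ↦ exp (-c * y ^ 2)) ‖v‖ := rfl
    _ = 2 * π * ∫ y in Ioi R, y * exp (-c * y ^ 2) := by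
      rw [integral_fun_norm_addHaar, hE, hball]
      simp only [nsmul_eq_mul, smul_eq_mul, Nat.cast_ofNat, Nat.add_one_sub_one, pow_one,
        ← indicator_mul_right _ (fun y ↦ y)]
      rw [setIntegral_indicator measurableSet_Ioi, Ioi_inter_Ioi, max_eq_right hR, mul_assoc]
    _ = π / c * exp (-c * R ^ 2) := by
      rw [integral_Ioi_mul_exp_neg_mul_sq hc]
      field_simp

theorem mul_norm_sq_sub_mul_norm_sub_sq {E : Type*} [NormedAddCommGroup E]
    [InnerProductSpace ℝ E] {p b : ℝ} (hpb : p ≠ b) (v w : E) :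
    p * ‖v‖ ^ 2 - b * ‖v - w‖ ^ 2
      = p * b / (b - p) * ‖w‖ ^ 2 - (b - p) * ‖v - (b / (b - p)) • w‖ ^ 2 := by
  have hbp : b - p ≠ 0 := sub_ne_zero.mpr hpb.symm
  rw [norm_sub_sq_real, norm_sub_sq_real, real_inner_smul_right, norm_smul, mul_pow,
    Real.norm_eq_abs, sq_abs]
  field_simp
  ring

theorem gaussian_shift_tail_integral_small_general (a b ε δ : ℝ) (hb : 0 < b)
    (hab : a + ε < b) (hδ : 0 < δ)
    (hδ' : Real.exp (-(b - a - ε) / δ ^ 2) ≤ δ) (w : EuclideanSpace ℝ (Fin 2)) :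
    (b / Real.pi) * ∫ v in {v : EuclideanSpace ℝ (Fin 2) |
          δ⁻¹ < ‖v - (b / (b - a - ε)) • w‖},
        Real.exp (ε * ‖v‖ ^ 2) * Real.exp (a * ‖v‖ ^ 2) * Real.exp (-b * ‖v - w‖ ^ 2)
      ≤ δ * (b / (b - a - ε)) * Real.exp ((a + ε) * b / (b - a - ε) * ‖w‖ ^ 2) := by
  have hc : 0 < b - a - ε := by linarith
  set c := b - a - ε
  set m := (b / c) • w
  set K := (a + ε) * b / c * ‖w‖ ^ 2
  have hsq (v : EuclideanSpace ℝ (Fin 2)) :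
      exp (ε * ‖v‖ ^ 2) * exp (a * ‖v‖ ^ 2) * exp (-b * ‖v - w‖ ^ 2)
        = exp K * exp (-c * ‖v - m‖ ^ 2) := by
    have h := mul_norm_sq_sub_mul_norm_sub_sq hab.ne v w
    rw [sub_add_eq_sub_sub] at h
    simp only [← exp_add]
    congr 1
    linarith
  have hshift : ∫ v in {v | δ⁻¹ < ‖v - m‖}, exp (-c * ‖v - m‖ ^ 2)
      = ∫ u in {u : EuclideanSpace ℝ (Fin 2) | δ⁻¹ < ‖u‖}, exp (-c * ‖u‖ ^ 2) :=
    (measurePreserving_sub_right volume m).setIntegral_preimage_emb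
      (measurableEmbedding_subRight m) (fun u ↦ exp (-c * ‖u‖ ^ 2)) {u | δ⁻¹ < ‖u‖}
  calc b / π * ∫ v in {v | δ⁻¹ < ‖v - m‖},
          exp (ε * ‖v‖ ^ 2) * exp (a * ‖v‖ ^ 2) * exp (-b * ‖v - w‖ ^ 2)
      = b / π * (exp K * ∫ u in {u : EuclideanSpace ℝ (Fin 2) | δ⁻¹ < ‖u‖},
          exp (-c * ‖u‖ ^ 2)) := by
        simp_rw [hsq]
        rw [integral_const_mul, hshift]
    _ = b / c * exp K * exp (-c / δ ^ 2) := by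
        rw [integral_setOf_lt_norm_exp_neg_mul_sq finrank_euclideanSpace_fin hc
          (inv_nonneg.mpr hδ.le)]
        field_simp
    _ ≤ b / c * exp K * δ := by gcongr
    _ = δ * (b / c) * exp K := by ring

/-- For `a, b, ε > 0` with `a + ε < b`, `w ∈ ℝ²` and `δ > 0` with
`e^{-(b-a-ε)/δ²} ≤ δ`,
`(b/π) ∫_{|v - (b/(b-a-ε))w| > δ⁻¹} e^{ε|v|²} e^{a|v|²} e^{-b|v-w|²} dv
  ≤ δ (b/(b-a-ε)) exp(((a+ε)b/(b-a-ε)) |w|²)`. -/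
theorem gaussian_shift_tail_integral_small (a b ε δ : ℝ) (ha : 0 < a) (hb : 0 < b)
    (hε : 0 < ε) (hab : a + ε < b) (hδ : 0 < δ)
    (hδ' : Real.exp (-(b - a - ε) / δ ^ 2) ≤ δ) (w : EuclideanSpace ℝ (Fin 2)) :
    (b / Real.pi) * ∫ v in {v : EuclideanSpace ℝ (Fin 2) |
          δ⁻¹ < ‖v - (b / (b - a - ε)) • w‖},
        Real.exp (ε * ‖v‖ ^ 2) * Real.exp (a * ‖v‖ ^ 2) * Real.exp (-b * ‖v - w‖ ^ 2)
      ≤ δ * (b / (b - a - ε)) * Real.exp ((a + ε) * b / (b - a - ε) * ‖w‖ ^ 2) :=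
  gaussian_shift_tail_integral_small_general a b ε δ hb hab hδ hδ' w
end

section
/- Let a > 0, b > 0, ε > 0 with a + ε < b. There exist constants C > 0 and δ_0 > 0 (depending only on a, b, ε) such that for every δ with 0 < δ ≤ δ_0 and every w ≥ 0, 2b ∫_{(b/(b-a-ε)) w + δ^{-1}}^{∞} v · e^{ε v^2} e^{a v^2} e^{-b v^2} e^{-b w^2} I_0(2 b v w) dv ≤ C e^{-(b-a-ε)/(4 δ^2)} · ( b/(b-a-ε) ) · exp( ((a+ε)b/(b-a-ε)) w^2 ). -/
/-!
Write `c = b - a - ε` and `s = b w / c`. Completing the square,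
`-c v² - b w² + 2 b v w = -c (v - s)² + ((a + ε) b / c) w²`,
so with `I₀(y) ≤ e^y` the integrand is at most `v e^{-c (v - s)²}` times the required factor
`exp(((a + ε) b / c) w²)`, and `∫_{s + 1/δ}^∞ (v - s) e^{-c (v - s)²} dv = e^{-c/δ²} / (2c)`.
The remaining part `s` of the weight `v = (v - s) + s` grows with `w`; it is absorbed by the
decay `I₀(y) ≤ e^y / √y`, because on the range of integration `y = 2 b v w ≥ 2 c s²`.
-/

open MeasureTheory Real

lemma besselI0_nonneg (y : ℝ) : 0 ≤ besselI0 y :=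
  mul_nonneg (by positivity) <|
    intervalIntegral.integral_nonneg pi_pos.le fun _ _ => (exp_pos _).le

lemma besselI0_le_exp {y : ℝ} (hy : 0 ≤ y) : besselI0 y ≤ exp y := by
  have hint : ∫ φ in (0:ℝ)..π, exp (y * cos φ) ≤ ∫ _ in (0:ℝ)..π, exp y :=
    intervalIntegral.integral_mono_on pi_pos.le
      (Continuous.intervalIntegrable (by fun_prop) _ _) intervalIntegrable_const
      fun φ _ => exp_le_exp.mpr (by nlinarith [cos_le_one φ])
  rw [intervalIntegral.integral_const, smul_eq_mul, sub_zero] at hint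
  calc besselI0 y ≤ 1 / π * (π * exp y) := by unfold besselI0; gcongr
    _ = exp y := by field_simp

/-- `cos φ ≤ 1 - 2φ²/π²` on `[0, π]` dominates the integrand by a half-Gaussian, which gives
`I₀(y) ≤ e^y √(π/(8y))`. -/
lemma besselI0_le_exp_div_sqrt {y : ℝ} (hy : 0 < y) : besselI0 y ≤ exp y / √y := by
  set α : ℝ := 2 * y / π ^ 2
  have hα : 0 < α := by positivity
  have hint :
      ∫ φ in (0:ℝ)..π, exp (y * cos φ) ≤ ∫ φ in (0:ℝ)..π, exp y * exp (-α * φ ^ 2) :=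
    intervalIntegral.integral_mono_on pi_pos.le (Continuous.intervalIntegrable (by fun_prop) _ _)
      (Continuous.intervalIntegrable (by fun_prop) _ _) fun φ hφ => by
      rw [← exp_add, exp_le_exp]
      have hcos := cos_le_one_sub_mul_cos_sq (abs_le.mpr ⟨by linarith [hφ.1, pi_pos], hφ.2⟩)
      have : y * cos φ ≤ y * (1 - 2 / π ^ 2 * φ ^ 2) := mul_le_mul_of_nonneg_left hcos hy.le
      linarith [show y * (1 - 2 / π ^ 2 * φ ^ 2) = y + -α * φ ^ 2 by ring]
  have htail : ∫ φ in (0:ℝ)..π, exp (-α * φ ^ 2) ≤ √(π / α) / 2 := by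
    rw [← integral_gaussian_Ioi, intervalIntegral.integral_of_le pi_pos.le]
    exact setIntegral_mono_set (integrable_exp_neg_mul_sq hα).integrableOn
      (.of_forall fun _ => (exp_pos _).le) Set.Ioc_subset_Ioi_self.eventuallyLE
  have hsqrt : √(π / α) ≤ 2 * π / √y := by
    rw [sqrt_le_left (by positivity), div_pow, sq_sqrt hy.le,
      div_le_div_iff₀ hα hy]
    have : (2 * π) ^ 2 * α = 8 * y := by simp only [α]; field_simp; ring
    nlinarith [pi_lt_d2]
  calc besselI0 y ≤ 1 / π * (exp y * (√(π / α) / 2)) := by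
        unfold besselI0
        rw [intervalIntegral.integral_const_mul] at hint
        gcongr
        exact hint.trans (by gcongr)
    _ ≤ 1 / π * (exp y * ((2 * π / √y) / 2)) := by gcongr
    _ = exp y / √y := by field_simp

lemma sqrt_one_add_mul_besselI0_le {y : ℝ} (hy : 0 ≤ y) :
    √(1 + y) * besselI0 y ≤ √2 * exp y := by
  rcases le_or_gt y 1 with hy1 | hy1
  · exact mul_le_mul (sqrt_le_sqrt (by linarith)) (besselI0_le_exp hy) (besselI0_nonneg y)
      (by positivity)
  · have hsy : 0 < √y := sqrt_pos.mpr (by linarith)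
    calc √(1 + y) * besselI0 y ≤ (√2 * √y) * (exp y / √y) := by
          rw [← sqrt_mul zero_le_two]
          exact mul_le_mul (sqrt_le_sqrt (by linarith)) (besselI0_le_exp_div_sqrt (by linarith))
            (besselI0_nonneg y) (by positivity)
      _ = √2 * exp y := by field_simp

lemma integral_Ioi_sub_mul_exp_neg_mul_sub_sq {c : ℝ} (hc : 0 < c) (s L : ℝ) :
    ∫ v in Set.Ioi L, (v - s) * exp (-c * (v - s) ^ 2) = exp (-c * (L - s) ^ 2) / (2 * c) := by
  set F : ℝ → ℝ := fun v => -exp (-c * (v - s) ^ 2) / (2 * c)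
  have hderiv (v : ℝ) : HasDerivAt F ((v - s) * exp (-c * (v - s) ^ 2)) v :=
    (((((hasDerivAt_id' v).sub_const s).pow 2).const_mul (-c)).exp.neg.div_const
      (2 * c)).congr_deriv (by simp only [Pi.pow_apply]; field_simp; ring)
  have hlim : Filter.Tendsto F Filter.atTop (nhds 0) := by
    have hsq : Filter.Tendsto (fun v : ℝ => (v - s) ^ 2) Filter.atTop Filter.atTop :=
      (Filter.tendsto_pow_atTop two_ne_zero).comp (Filter.tendsto_atTop_add_const_right _ (-s)
        Filter.tendsto_id)
    simpa [F] using (tendsto_exp_atBot.comp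
      (hsq.const_mul_atTop_of_neg (neg_lt_zero.mpr hc))).neg.div_const (2 * c)
  rw [integral_Ioi_of_hasDerivAt_of_tendsto' (fun v _ => hderiv v)
    ((integrable_mul_exp_neg_mul_sq hc).comp_sub_right s).integrableOn hlim]
  simp only [F]
  ring

lemma setIntegral_Ioi_le_of_le_mul_gaussian {f : ℝ → ℝ} {B c s L : ℝ} (hc : 0 < c)
    (hf₀ : ∀ v ∈ Set.Ioi L, 0 ≤ f v)
    (hf : ∀ v ∈ Set.Ioi L, f v ≤ B * ((v - s) * exp (-c * (v - s) ^ 2))) :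
    ∫ v in Set.Ioi L, f v ≤ B * (exp (-c * (L - s) ^ 2) / (2 * c)) := by
  rw [← integral_Ioi_sub_mul_exp_neg_mul_sub_sq hc, ← integral_const_mul]
  exact integral_mono_of_nonneg (ae_restrict_of_forall_mem measurableSet_Ioi hf₀)
    (((integrable_mul_exp_neg_mul_sq hc).comp_sub_right s).const_mul B).integrableOn
    (ae_restrict_of_forall_mem measurableSet_Ioi hf)

lemma mul_besselI0_le {b c v w : ℝ} (hb : 0 ≤ b) (hc : 0 < c) (hw : 0 ≤ w)
    (hv : b / c * w + 1 ≤ v) :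
    v * besselI0 (2 * b * v * w) ≤ (√2 + 1 / √c) * (v - b / c * w) * exp (2 * b * v * w) := by
  set s := b / c * w
  set y := 2 * b * v * w
  have hs : 0 ≤ s := by positivity
  have hvs : 1 ≤ v - s := by linarith
  have hy : 0 ≤ y := mul_nonneg (mul_nonneg (by positivity) (by linarith)) hw
  have hsc : 0 < √c := sqrt_pos.mpr hc
  have hone : 1 ≤ √(1 + y) := one_le_sqrt.mpr (by linarith)
  have hsy : √2 * √c * s ≤ √(1 + y) := by
    rw [← sqrt_mul zero_le_two, ← sqrt_sq hs, ← sqrt_mul (by positivity)]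
    refine sqrt_le_sqrt ?_
    have : c * s = b * w := by simp only [s]; field_simp
    nlinarith [mul_nonneg hb hw]
  have hsplit : √2 * v ≤ (√2 + 1 / √c) * (v - s) * √(1 + y) := by
    have h1 : √2 * s ≤ 1 / √c * √(1 + y) := by
      rw [div_mul_eq_mul_div, one_mul, le_div_iff₀ hsc]; linarith
    have h2 : √(1 + y) ≤ (v - s) * √(1 + y) := le_mul_of_one_le_left (by positivity) hvs
    have h3 : v - s ≤ (v - s) * √(1 + y) := le_mul_of_one_le_right (by linarith) hone
    have h2' : 1 / √c * √(1 + y) ≤ 1 / √c * ((v - s) * √(1 + y)) := by gcongr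
    have h3' : √2 * (v - s) ≤ √2 * ((v - s) * √(1 + y)) := by gcongr
    linarith
  have hI := sqrt_one_add_mul_besselI0_le hy
  have hI0 := besselI0_nonneg y
  refine le_of_mul_le_mul_left ?_ (sqrt_pos.mpr zero_lt_two)
  calc √2 * (v * besselI0 y) ≤ (√2 + 1 / √c) * (v - s) * (√(1 + y) * besselI0 y) := by
        linarith [mul_le_mul_of_nonneg_right hsplit hI0]
    _ ≤ (√2 + 1 / √c) * (v - s) * (√2 * exp y) :=
        mul_le_mul_of_nonneg_left hI (mul_nonneg (by positivity) (by linarith))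
    _ = √2 * ((√2 + 1 / √c) * (v - s) * exp y) := by ring

lemma mul_exp_mul_besselI0_le_mul_gaussian {a b ε v w : ℝ} (hb : 0 ≤ b) (hc : 0 < b - a - ε)
    (hw : 0 ≤ w) (hv : b / (b - a - ε) * w + 1 ≤ v) :
    v * exp (ε * v ^ 2) * exp (a * v ^ 2) * exp (-b * v ^ 2) * exp (-b * w ^ 2)
        * besselI0 (2 * b * v * w)
      ≤ (√2 + 1 / √(b - a - ε)) * exp ((a + ε) * b / (b - a - ε) * w ^ 2)
        * ((v - b / (b - a - ε) * w) * exp (-(b - a - ε) * (v - b / (b - a - ε) * w) ^ 2)) := by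
  set c := b - a - ε
  set s := b / c * w
  set E := ε * v ^ 2 + a * v ^ 2 + -b * v ^ 2 + -b * w ^ 2
  have hsquare : exp E * exp (2 * b * v * w)
      = exp ((a + ε) * b / c * w ^ 2) * exp (-c * (v - s) ^ 2) := by
    rw [← exp_add, ← exp_add]
    congr 1
    have hc₀ : b - a - ε ≠ 0 := hc.ne'
    simp only [c, s, E]
    field_simp
    ring
  calc _ = exp E * (v * besselI0 (2 * b * v * w)) := by simp only [E, exp_add]; ring
    _ ≤ exp E * ((√2 + 1 / √c) * (v - s) * exp (2 * b * v * w)) :=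
        mul_le_mul_of_nonneg_left (mul_besselI0_le hb hc hw hv) (exp_pos _).le
    _ = _ := by linear_combination (√2 + 1 / √c) * (v - s) * hsquare

theorem bessel_gaussian_tail_bound_general (a b ε : ℝ) (hb : 0 < b) (hab : a + ε < b) :
    ∃ C > (0:ℝ), ∃ δ₀ > (0:ℝ), ∀ δ : ℝ, 0 < δ → δ ≤ δ₀ → ∀ w : ℝ, 0 ≤ w →
      2 * b * ∫ v in Set.Ioi ((b / (b - a - ε)) * w + δ⁻¹),
          v * Real.exp (ε * v ^ 2) * Real.exp (a * v ^ 2) * Real.exp (-b * v ^ 2)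
            * Real.exp (-b * w ^ 2) * besselI0 (2 * b * v * w)
        ≤ C * Real.exp (-(b - a - ε) / (4 * δ ^ 2)) * (b / (b - a - ε))
            * Real.exp ((a + ε) * b / (b - a - ε) * w ^ 2) := by
  have hc : 0 < b - a - ε := by linarith
  refine ⟨√2 + 1 / √(b - a - ε), by positivity, 1, one_pos, fun δ hδ hδ₁ w hw => ?_⟩
  have hδ_inv : 1 ≤ δ⁻¹ := (one_le_inv₀ hδ).mpr hδ₁
  have hs : 0 ≤ b / (b - a - ε) * w := by positivity
  have hnonneg (v : ℝ) (hv : b / (b - a - ε) * w + δ⁻¹ < v) :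
      0 ≤ v * exp (ε * v ^ 2) * exp (a * v ^ 2) * exp (-b * v ^ 2) * exp (-b * w ^ 2)
        * besselI0 (2 * b * v * w) := by
    have : 0 < v := by linarith
    have := besselI0_nonneg (2 * b * v * w)
    positivity
  have htail := setIntegral_Ioi_le_of_le_mul_gaussian hc hnonneg
    fun v (hv : _ < v) => mul_exp_mul_besselI0_le_mul_gaussian hb.le hc hw (by linarith)
  rw [add_sub_cancel_left] at htail
  calc _ ≤ 2 * b * ((√2 + 1 / √(b - a - ε)) * exp ((a + ε) * b / (b - a - ε) * w ^ 2)
          * (exp (-(b - a - ε) * δ⁻¹ ^ 2) / (2 * (b - a - ε)))) := by gcongr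
    _ = (√2 + 1 / √(b - a - ε)) * exp (-(b - a - ε) * δ⁻¹ ^ 2) * (b / (b - a - ε))
          * exp ((a + ε) * b / (b - a - ε) * w ^ 2) := by field_simp
    _ ≤ _ := by
        gcongr
        rw [neg_mul, neg_div, neg_le_neg_iff, inv_pow, ← div_eq_mul_inv]
        gcongr
        linarith [sq_nonneg δ]

/-- For `a, b, ε > 0` with `a + ε < b` there exist `C > 0` and `δ₀ > 0` such that
for all `0 < δ ≤ δ₀` and all `w ≥ 0`,
`2b ∫_{(b/(b-a-ε))w + δ⁻¹}^∞ v e^{εv²} e^{av²} e^{-bv²} e^{-bw²} I₀(2bvw) dv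
  ≤ C e^{-(b-a-ε)/(4δ²)} (b/(b-a-ε)) exp(((a+ε)b/(b-a-ε)) w²)`. -/
theorem bessel_gaussian_tail_bound (a b ε : ℝ) (ha : 0 < a) (hb : 0 < b)
    (hε : 0 < ε) (hab : a + ε < b) :
    ∃ C > (0:ℝ), ∃ δ₀ > (0:ℝ), ∀ δ : ℝ, 0 < δ → δ ≤ δ₀ → ∀ w : ℝ, 0 ≤ w →
      2 * b * ∫ v in Set.Ioi ((b / (b - a - ε)) * w + δ⁻¹),
          v * Real.exp (ε * v ^ 2) * Real.exp (a * v ^ 2) * Real.exp (-b * v ^ 2)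
            * Real.exp (-b * w ^ 2) * besselI0 (2 * b * v * w)
        ≤ C * Real.exp (-(b - a - ε) / (4 * δ ^ 2)) * (b / (b - a - ε))
            * Real.exp ((a + ε) * b / (b - a - ε) * w ^ 2) :=
  bessel_gaussian_tail_bound_general a b ε hb hab
end

section
/- Let T_0 > 0, T_w > 0, 0 < r ≤ 1, and v ∈ R. Then ∫_0^∞ (u/(r T_w)) · exp( -( v^2 + (1-r) u^2 ) / (2 T_w r) ) · I_0( sqrt(1-r) · v · u / (T_w r) ) · (1/T_0) · exp( -u^2/(2 T_0) ) du = (1/(T_0 (1-r) + T_w r)) · exp( -v^2 / (2 [T_0 (1-r) + T_w r]) ). -/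
/-!
Collecting exponents, the integrand is a constant times `u e^{-βu²} I₀(cu)` with
`β = (T₀(1-r) + T_w r)/(2 T_w r T₀)` and `c = √(1-r) v/(T_w r)`. Writing `I₀` as an angular
average, `2π ∫_0^∞ u e^{-βu²} I₀(cu) du` is the integral of the shifted Gaussian
`e^{-β|w|² + c w₁}` over the plane in polar coordinates; in Cartesian coordinates it factorizes
and equals `(π/β) e^{c²/(4β)}`.
-/

open MeasureTheory Real

lemma exp_neg_mul_sq_add_mul_eq {β : ℝ} (hβ : 0 < β) (c x : ℝ) :
    exp (-β * x ^ 2 + c * x) = exp (c ^ 2 / (4 * β)) * exp (-β * (x - c / (2 * β)) ^ 2) := by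
  rw [← exp_add]
  congr 1
  field_simp
  ring

lemma integrable_exp_neg_mul_sq_add_mul {β : ℝ} (hβ : 0 < β) (c : ℝ) :
    Integrable fun x : ℝ ↦ exp (-β * x ^ 2 + c * x) := by
  simp_rw [exp_neg_mul_sq_add_mul_eq hβ]
  exact ((integrable_exp_neg_mul_sq hβ).comp_sub_right _).const_mul _

lemma integral_exp_neg_mul_sq_add_mul {β : ℝ} (hβ : 0 < β) (c : ℝ) :
    ∫ x : ℝ, exp (-β * x ^ 2 + c * x) = √(π / β) * exp (c ^ 2 / (4 * β)) := by
  simp_rw [exp_neg_mul_sq_add_mul_eq hβ]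
  rw [integral_const_mul, integral_sub_right_eq_self (fun x ↦ exp (-β * x ^ 2)),
    integral_gaussian, mul_comm]

lemma integrableOn_polarCoord_target {E : Type*} [NormedAddCommGroup E] [NormedSpace ℝ E]
    {f : ℝ × ℝ → E} (hf : Integrable f) :
    IntegrableOn (fun p ↦ p.1 • f (polarCoord.symm p)) polarCoord.target := by
  have h := (integrableOn_image_iff_integrableOn_abs_det_fderiv_smul volume
    polarCoord.open_target.measurableSet
    (fun p _ ↦ (hasFDerivAt_polarCoord_symm p).hasFDerivWithinAt) polarCoord.symm.injOn f).1
    (by rw [polarCoord.symm_image_target_eq_source]; exact hf.integrableOn)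
  refine h.congr_fun (fun p hp ↦ ?_) polarCoord.open_target.measurableSet
  simp only [det_fderivPolarCoordSymm, abs_of_pos (show 0 < p.1 from hp.1)]

lemma integral_Ioo_neg_pi_pi_exp_mul_cos (y : ℝ) :
    ∫ φ in Set.Ioo (-π) π, exp (y * cos φ) = 2 * π * besselI0 y := by
  have hintegrable : ∀ a b : ℝ, IntervalIntegrable (fun φ ↦ exp (y * cos φ)) volume a b :=
    fun a b ↦ (by fun_prop : Continuous fun φ ↦ exp (y * cos φ)).intervalIntegrable a b
  have hsymm : ∫ φ in (-π)..0, exp (y * cos φ) = ∫ φ in (0:ℝ)..π, exp (y * cos φ) := by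
    simpa [cos_neg] using (intervalIntegral.integral_comp_neg (a := 0) (b := π)
      (fun φ ↦ exp (y * cos φ))).symm
  rw [← integral_Ioc_eq_integral_Ioo, ← intervalIntegral.integral_of_le (by linarith [pi_pos]),
    ← intervalIntegral.integral_add_adjacent_intervals (hintegrable (-π) 0) (hintegrable 0 π),
    hsymm, besselI0]
  field_simp
  ring

lemma integral_Ioi_mul_exp_neg_mul_sq_mul_besselI0 {β : ℝ} (hβ : 0 < β) (c : ℝ) :
    ∫ u in Set.Ioi 0, u * exp (-β * u ^ 2) * besselI0 (c * u)
      = exp (c ^ 2 / (4 * β)) / (2 * β) := by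
  set g : ℝ × ℝ → ℝ := fun w ↦ exp (-β * w.1 ^ 2 + c * w.1) * exp (-β * w.2 ^ 2)
  have hg : Integrable g :=
    (integrable_exp_neg_mul_sq_add_mul hβ c).mul_prod (integrable_exp_neg_mul_sq hβ)
  have hg_polar : ∀ u φ : ℝ,
      u • g (polarCoord.symm (u, φ)) = u * exp (-β * u ^ 2) * exp (c * u * cos φ) := by
    intro u φ
    simp only [g, polarCoord_symm_apply, smul_eq_mul, mul_assoc, ← exp_add]
    congr 2
    linear_combination (-β * u ^ 2) * sin_sq_add_cos_sq φ
  have hg_fubini := setIntegral_prod _ (integrableOn_polarCoord_target hg)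
  calc ∫ u in Set.Ioi 0, u * exp (-β * u ^ 2) * besselI0 (c * u)
      = (2 * π)⁻¹ * ∫ u in Set.Ioi 0, ∫ φ in Set.Ioo (-π) π,
          u * exp (-β * u ^ 2) * exp (c * u * cos φ) := by
        simp_rw [integral_const_mul, integral_Ioo_neg_pi_pi_exp_mul_cos, ← integral_const_mul]
        congr 1 with u
        field_simp
    _ = (2 * π)⁻¹ * ∫ w, g w := by
        rw [← integral_comp_polarCoord_symm, polarCoord_target, Measure.volume_eq_prod,
          hg_fubini]
        simp_rw [hg_polar]
    _ = exp (c ^ 2 / (4 * β)) / (2 * β) := by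
        rw [Measure.volume_eq_prod, integral_prod_mul (fun x ↦ exp (-β * x ^ 2 + c * x))
          (fun y ↦ exp (-β * y ^ 2)),
          integral_exp_neg_mul_sq_add_mul hβ, integral_gaussian, mul_right_comm,
          mul_self_sqrt (by positivity)]
        field_simp

/-- Normal-component computation in the boundary-flux identity for the
Cercignani–Lampis kernel: for `T₀, T_w > 0`, `0 < r ≤ 1`, `v ∈ ℝ`,
`∫_0^∞ (u/(rT_w)) exp(-(v²+(1-r)u²)/(2T_w r)) I₀(√(1-r) v u/(T_w r))
       (1/T₀) exp(-u²/(2T₀)) du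
  = (1/(T₀(1-r) + T_w r)) exp(-v²/(2[T₀(1-r) + T_w r]))`. -/
theorem CL_normal_flux (T0 Tw r : ℝ) (hT0 : 0 < T0) (hTw : 0 < Tw)
    (hr : 0 < r) (hr' : r ≤ 1) (v : ℝ) :
    ∫ u in Set.Ioi (0:ℝ),
        (u / (r * Tw)) * Real.exp (-(v ^ 2 + (1 - r) * u ^ 2) / (2 * Tw * r))
          * besselI0 (Real.sqrt (1 - r) * v * u / (Tw * r))
          * ((1 / T0) * Real.exp (-u ^ 2 / (2 * T0)))
      = (1 / (T0 * (1 - r) + Tw * r))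
          * Real.exp (-v ^ 2 / (2 * (T0 * (1 - r) + Tw * r))) := by
  set D := T0 * (1 - r) + Tw * r
  have hD : 0 < D := by nlinarith
  set β := D / (2 * Tw * r * T0)
  set c := √(1 - r) * v / (Tw * r)
  have hβ : 0 < β := by positivity
  have h_integrand : ∀ u : ℝ,
      (u / (r * Tw)) * exp (-(v ^ 2 + (1 - r) * u ^ 2) / (2 * Tw * r))
          * besselI0 (√(1 - r) * v * u / (Tw * r)) * ((1 / T0) * exp (-u ^ 2 / (2 * T0)))
        = exp (-v ^ 2 / (2 * Tw * r)) / (r * Tw * T0)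
          * (u * exp (-β * u ^ 2) * besselI0 (c * u)) := by
    intro u
    have hexp : exp (-(v ^ 2 + (1 - r) * u ^ 2) / (2 * Tw * r)) * exp (-u ^ 2 / (2 * T0))
        = exp (-v ^ 2 / (2 * Tw * r)) * exp (-β * u ^ 2) := by
      rw [← exp_add, ← exp_add]
      congr 1
      simp only [β, D]
      field_simp
      ring
    rw [show √(1 - r) * v * u / (Tw * r) = c * u by ring]
    linear_combination (u * besselI0 (c * u) / (r * Tw * T0)) * hexp
  have h_exponent : -v ^ 2 / (2 * Tw * r) + c ^ 2 / (4 * β) = -v ^ 2 / (2 * D) := by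
    simp only [c, β, div_pow, mul_pow, sq_sqrt (by linarith : 0 ≤ 1 - r)]
    field_simp
    simp only [D]
    ring
  simp_rw [h_integrand]
  rw [integral_const_mul, integral_Ioi_mul_exp_neg_mul_sq_mul_besselI0 hβ, div_mul_div_comm,
    ← exp_add, h_exponent]
  simp only [β]
  field_simp
end
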